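/- arXiv:1509.08082 — 4 statements merged into one kernel-verified Lean document; each statement's English description precedes it below -/
import Mathlib

section
/- If the points x_1,...,x_N ∈ ℝ^n are not all collinear (i.e. they do not all lie on one affine line), then the L1 median objective F(x) = Σ_{i=1}^N ‖x - x_i‖ is strictly convex, and hence the L1 median (its minimizer) is unique. -/
lemma aux_not_sameRay
    (n N : ℕ) (p : Fin N → EuclideanSpace ℝ (Fin n))
    (hcol : ¬ Collinear ℝ (Set.range p))
    (x y : EuclideanSpace ℝ (Fin n)) (hxy : x ≠ y) :
    ∃ i, ¬ SameRay ℝ (x - p i) (y - p i) := by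
  by_contra h
  push_neg at h
  apply hcol
  rw [collinear_iff_exists_forall_eq_smul_vadd]
  refine ⟨x, y - x, ?_⟩
  rintro q ⟨i, rfl⟩
  obtain ⟨u, a, b, ha, hb, hab, hxu, hyu⟩ := (h i).exists_eq_smul
  rcases eq_or_ne u 0 with rfl | hu
  · refine ⟨0, ?_⟩
    simp only [smul_zero] at hxu
    have : p i = x := by
      have := sub_eq_zero.mp hxu
      linear_combination (norm := module) -this
    simp [this]
  · have hba : b - a ≠ 0 := by
      intro hba
      apply hxy
      have : y - x = (b - a) • u := by
        have : y - x = (y - p i) - (x - p i) := by abel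
        rw [this, hxu, hyu, sub_smul]
      rw [hba, zero_smul, sub_eq_zero] at this
      exact this.symm
    refine ⟨-a / (b - a), ?_⟩
    have hyx : y - x = (b - a) • u := by
      have : y - x = (y - p i) - (x - p i) := by abel
      rw [this, hxu, hyu, sub_smul]
    have hpx : p i - x = (-a) • u := by
      rw [neg_smul, ← hxu]; abel
    have : p i = (p i - x) + x := by abel
    rw [this, hpx, hyx]
    congr 1
    rw [smul_smul, div_mul_cancel₀ _ hba]

/-- If the data points are not all collinear, the L¹ median objective is strictly
convex and the L¹ median (its minimizer) is unique. -/
theorem l1_median_strictly_convex_and_unique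
    (n N : ℕ) (p : Fin N → EuclideanSpace ℝ (Fin n))
    (hcol : ¬ Collinear ℝ (Set.range p)) :
    StrictConvexOn ℝ Set.univ (fun x : EuclideanSpace ℝ (Fin n) => ∑ i, ‖x - p i‖) ∧
    ∀ m m' : EuclideanSpace ℝ (Fin n),
      (∀ y : EuclideanSpace ℝ (Fin n), ∑ i, ‖m - p i‖ ≤ ∑ i, ‖y - p i‖) →
      (∀ y : EuclideanSpace ℝ (Fin n), ∑ i, ‖m' - p i‖ ≤ ∑ i, ‖y - p i‖) →
      m = m' := by
  have hsc : StrictConvexOn ℝ Set.univ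
      (fun x : EuclideanSpace ℝ (Fin n) => ∑ i, ‖x - p i‖) := by
    refine ⟨convex_univ, ?_⟩
    intro x _ y _ hxy a b ha hb hab
    obtain ⟨i₀, hi₀⟩ := aux_not_sameRay n N p hcol x y hxy
    have key : ∀ i, a • x + b • y - p i = a • (x - p i) + b • (y - p i) := by
      intro i
      rw [smul_sub, smul_sub, show a • x - a • p i + (b • y - b • p i)
        = a • x + b • y - (a + b) • p i from by rw [add_smul]; abel, hab, one_smul]
    have hle : ∀ i : Fin N, i ∈ Finset.univ →
        ‖a • x + b • y - p i‖ ≤ a * ‖x - p i‖ + b * ‖y - p i‖ := by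
      intro i _
      rw [key i]
      calc ‖a • (x - p i) + b • (y - p i)‖ ≤ ‖a • (x - p i)‖ + ‖b • (y - p i)‖ :=
            norm_add_le _ _
        _ = a * ‖x - p i‖ + b * ‖y - p i‖ := by
            rw [norm_smul, norm_smul, Real.norm_of_nonneg ha.le, Real.norm_of_nonneg hb.le]
    have hlt : ‖a • x + b • y - p i₀‖ < a * ‖x - p i₀‖ + b * ‖y - p i₀‖ := by
      rw [key i₀]
      have hns : ¬ SameRay ℝ (a • (x - p i₀)) (b • (y - p i₀)) := by
        intro hsr
        have h2 := (hsr.pos_smul_left (inv_pos.mpr ha)).pos_smul_right (inv_pos.mpr hb)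
        rw [inv_smul_smul₀ ha.ne', inv_smul_smul₀ hb.ne'] at h2
        exact hi₀ h2
      calc ‖a • (x - p i₀) + b • (y - p i₀)‖ < ‖a • (x - p i₀)‖ + ‖b • (y - p i₀)‖ :=
            norm_add_lt_of_not_sameRay hns
        _ = a * ‖x - p i₀‖ + b * ‖y - p i₀‖ := by
            rw [norm_smul, norm_smul, Real.norm_of_nonneg ha.le, Real.norm_of_nonneg hb.le]
    calc (∑ i, ‖a • x + b • y - p i‖)
        < ∑ i, (a * ‖x - p i‖ + b * ‖y - p i‖) :=
          Finset.sum_lt_sum hle ⟨i₀, Finset.mem_univ _, hlt⟩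
      _ = a • ∑ i, ‖x - p i‖ + b • ∑ i, ‖y - p i‖ := by
          rw [Finset.sum_add_distrib, ← Finset.mul_sum, ← Finset.mul_sum]; rfl
  refine ⟨hsc, ?_⟩
  intro m m' hm hm'
  by_contra hne
  have h1 := hsc.2 (Set.mem_univ m) (Set.mem_univ m') hne one_half_pos one_half_pos (by norm_num)
  have h2 := hm ((1/2 : ℝ) • m + (1/2 : ℝ) • m')
  have h3 := hm' m
  have h4 := hm m'
  simp only [smul_eq_mul] at h1
  linarith
end

section
/- For four points P_1, P_2, P_3, P_4 in the plane such that P_4 lies in the interior of the triangle P_1P_2P_3, the point P_4 minimizes both the L1 median objective Σ_i ‖x - P_i‖ and the bivariate Oja objective Σ_{i<j} |[x, P_i, P_j]|. -/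
/-- 2×2 determinant of two planar vectors. -/
noncomputable def det2 (a b : EuclideanSpace ℝ (Fin 2)) : ℝ :=
  a 0 * b 1 - a 1 * b 0

/-- The bivariate Oja objective for four planar points: sum of triangle areas
over all pairs of data points. -/
noncomputable def ojaObj4 (P₁ P₂ P₃ P₄ y : EuclideanSpace ℝ (Fin 2)) : ℝ :=
  (1 / 2) * (|det2 (P₁ - y) (P₂ - y)| + |det2 (P₁ - y) (P₃ - y)| + |det2 (P₁ - y) (P₄ - y)| +
    |det2 (P₂ - y) (P₃ - y)| + |det2 (P₂ - y) (P₄ - y)| + |det2 (P₃ - y) (P₄ - y)|)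

/-!
Write `x = P₄` and let `y` be arbitrary. The triangle `P₁P₂P₃` has nonempty interior, so `y` has
barycentric coordinates with respect to it, and replacing a suitable vertex by `y` gives a
triangle that still contains `x`, say `yP₁P₂`. The function `z ↦ ‖z - P₁‖ + ‖z - P₂‖` is convex,
hence bounded on that triangle by its values at the vertices, and by the triangle inequality its
values at `P₁` and `P₂` are at most its value at `y`. Adding `‖x - P₃‖ ≤ ‖x - y‖ + ‖y - P₃‖` gives
the median inequality.

For the Oja objective, the signed areas `det2 (Pᵢ - y) (Pⱼ - y)` of the triangles `yPᵢPⱼ`,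
`1 ≤ i < j ≤ 3`, add up with alternating signs to the signed area of `P₁P₂P₃` for every `y`, and
for `y = x` in the triangle their absolute values add up to its area. The triangles with vertex
`P₄` are degenerate at `y = x`.
-/

open Set Finset

section ConvexCombination

variable {ι E : Type*} [Fintype ι] [AddCommGroup E] [Module ℝ E]

theorem exists_weights_of_mem_convexHull_range {p : ι → E} {x : E}
    (hx : x ∈ convexHull ℝ (range p)) :
    ∃ w : ι → ℝ, (∀ i, 0 ≤ w i) ∧ ∑ i, w i = 1 ∧ ∑ i, w i • p i = x := by
  classical
  rw [convexHull_range_eq_exists_affineCombination] at hx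
  obtain ⟨s, w, hw₀, hw₁, rfl⟩ := hx
  refine ⟨(s : Set ι).indicator w, fun i => ?_, ?_, ?_⟩
  · by_cases hi : i ∈ s <;> simp [hi, hw₀]
  · rw [Finset.sum_indicator_subset _ s.subset_univ, hw₁]
  · simp_rw [← Set.indicator_smul_apply_left]
    rw [Finset.sum_indicator_subset _ s.subset_univ,
      s.affineCombination_eq_linear_combination p w hw₁]

theorem exists_weights_of_mem_affineSpan_range {p : ι → E} {y : E}
    (hy : y ∈ affineSpan ℝ (range p)) :
    ∃ c : ι → ℝ, ∑ i, c i = 1 ∧ ∑ i, c i • p i = y := by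
  obtain ⟨c, hc, rfl⟩ := eq_affineCombination_of_mem_affineSpan_of_fintype hy
  exact ⟨c, hc, (univ.affineCombination_eq_linear_combination p c hc).symm⟩

/-- With `x = ∑ lᵢ pᵢ` and `y = ∑ cᵢ pᵢ`, the vertex `k` to replace is the one minimising `lₖ / cₖ`
among those with `cₖ > 0`: then `x = t y + ∑ (lᵢ - t cᵢ) pᵢ` with `t = lₖ / cₖ` is a convex
combination in which `pₖ` has weight zero. -/
theorem exists_mem_convexHull_range_update [DecidableEq ι] {p : ι → E} {x y : E}
    (hx : x ∈ convexHull ℝ (range p)) (hy : y ∈ affineSpan ℝ (range p)) :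
    ∃ k, x ∈ convexHull ℝ (range (Function.update p k y)) := by
  obtain ⟨l, hl₀, hl₁, rfl⟩ := exists_weights_of_mem_convexHull_range hx
  obtain ⟨c, hc₁, hcy⟩ := exists_weights_of_mem_affineSpan_range hy
  have hpos : (univ.filter fun i => 0 < c i).Nonempty := by
    by_contra! h
    have : ∑ i, c i ≤ 0 := Finset.sum_nonpos fun i _ => by
      simpa using Finset.filter_eq_empty_iff.mp h (Finset.mem_univ i)
    linarith
  obtain ⟨k, hk, hmin⟩ := Finset.exists_min_image _ (fun i => l i / c i) hpos
  simp only [Finset.mem_filter, Finset.mem_univ, true_and] at hk hmin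
  set t := l k / c k
  have ht : 0 ≤ t := div_nonneg (hl₀ k) hk.le
  have hle : ∀ i, t * c i ≤ l i := fun i => by
    rcases lt_or_ge 0 (c i) with hi | hi
    · exact (le_div_iff₀ hi).mp (hmin i hi)
    · nlinarith [hl₀ i]
  have hk0 : l k - t * c k = 0 := by simp [t, div_mul_cancel₀ _ hk.ne']
  refine ⟨k, mem_convexHull_of_exists_fintype (fun i => l i - t * c i + if i = k then t else 0)
    (Function.update p k y) (fun i => ?_) ?_ (fun i => mem_range_self i) ?_⟩
  · split_ifs <;> linarith [hle i]
  · simp [Finset.sum_add_distrib, ← Finset.mul_sum, hl₁, hc₁]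
  · have hterm : ∀ i, (l i - t * c i + if i = k then t else 0) • Function.update p k y i =
        (l i • p i - t • c i • p i) + if i = k then t • y else 0 := fun i => by
      by_cases hi : i = k
      · subst hi
        rw [if_pos rfl, Function.update_self, hk0, zero_add, ← mul_smul, ← sub_smul, hk0,
          zero_smul, if_pos rfl, zero_add]
      · simp [hi, sub_smul, mul_smul]
    simp_rw [hterm, Finset.sum_add_distrib, Finset.sum_sub_distrib, ← Finset.smul_sum, hcy]
    simp

theorem range_vecCons_three {α : Type*} (a b c : α) : range ![a, b, c] = {a, b, c} := by
  rw [Matrix.range_cons, Matrix.range_cons, Matrix.range_cons_empty]; rfl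

theorem mem_convexHull_insert_pair_of_mem_convexHull_triple {a b c x y : E}
    (hx : x ∈ convexHull ℝ {a, b, c}) (hy : y ∈ affineSpan ℝ {a, b, c}) :
    x ∈ convexHull ℝ {y, b, c} ∨ x ∈ convexHull ℝ {y, a, c} ∨ x ∈ convexHull ℝ {y, a, b} := by
  rw [← range_vecCons_three] at hx hy
  obtain ⟨k, hk⟩ := exists_mem_convexHull_range_update hx hy
  fin_cases k <;> [left; (right; left); (right; right)] <;> convert hk using 2 <;> ext z <;>
    simp [Fin.exists_fin_succ, Function.update_apply, eq_comm] <;> tauto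

end ConvexCombination

section DistanceSum

variable {E : Type*} [SeminormedAddCommGroup E] [NormedSpace ℝ E]

theorem norm_sub_add_norm_sub_le_of_mem_convexHull {a b x y : E}
    (hx : x ∈ convexHull ℝ {y, a, b}) : ‖x - a‖ + ‖x - b‖ ≤ ‖y - a‖ + ‖y - b‖ := by
  have hconv : ConvexOn ℝ univ fun z : E => ‖z - a‖ + ‖z - b‖ := by
    have h := (convexOn_dist a convex_univ).add (convexOn_dist b convex_univ)
    simp only [dist_eq_norm] at h
    exact h
  obtain ⟨z, hz, hxz⟩ := hconv.exists_ge_of_mem_convexHull (subset_univ _) hx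
  have hab : ‖a - b‖ ≤ ‖y - a‖ + ‖y - b‖ := by
    simpa only [norm_sub_rev a y] using norm_sub_le_norm_sub_add_norm_sub a y b
  have hba : ‖b - a‖ ≤ ‖y - a‖ + ‖y - b‖ := norm_sub_rev a b ▸ hab
  rcases hz with rfl | rfl | rfl
  · exact hxz
  all_goals simp only [sub_self, norm_zero, zero_add, add_zero] at hxz; linarith

theorem norm_sub_add_norm_sub_add_norm_sub_le_of_mem_convexHull {a b c x y : E}
    (hx : x ∈ convexHull ℝ {y, a, b}) :
    ‖x - a‖ + ‖x - b‖ + ‖x - c‖ ≤ ‖y - a‖ + ‖y - b‖ + ‖y - c‖ + ‖y - x‖ := by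
  have hab := norm_sub_add_norm_sub_le_of_mem_convexHull hx
  have hc := norm_sub_le_norm_sub_add_norm_sub x y c
  rw [norm_sub_rev x y] at hc
  linarith

end DistanceSum

section Det2

local notation "ℝ²" => EuclideanSpace ℝ (Fin 2)

theorem det2_zero_right (a : ℝ²) : det2 a 0 = 0 := by
  simp [det2]

theorem det2_sub_sub_add_det2_sub (a b c y : ℝ²) :
    det2 (a - y) (b - y) - det2 (a - y) (c - y) + det2 (b - y) (c - y) = det2 (a - c) (b - c) := by
  simp only [det2, PiLp.sub_apply]
  ring

theorem abs_det2_sub_le (a b c y : ℝ²) :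
    |det2 (a - c) (b - c)| ≤
      |det2 (a - y) (b - y)| + |det2 (a - y) (c - y)| + |det2 (b - y) (c - y)| := by
  rw [← det2_sub_sub_add_det2_sub a b c y]
  calc _ ≤ |det2 (a - y) (b - y) - det2 (a - y) (c - y)| + |det2 (b - y) (c - y)| :=
        abs_add_le _ _
    _ ≤ _ := by gcongr; exact abs_sub _ _

theorem abs_det2_sub_add_abs_det2_sub_add_abs_det2_sub_of_mem_convexHull {a b c x : ℝ²}
    (hx : x ∈ convexHull ℝ {a, b, c}) :
    |det2 (a - x) (b - x)| + |det2 (a - x) (c - x)| + |det2 (b - x) (c - x)| =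
      |det2 (a - c) (b - c)| := by
  rw [← range_vecCons_three] at hx
  obtain ⟨w, hw₀, hw₁, hxw⟩ := exists_weights_of_mem_convexHull_range hx
  simp only [Fin.sum_univ_three, Matrix.cons_val] at hw₁ hxw
  have hw₂ : w 2 = 1 - w 0 - w 1 := by linarith
  set S := det2 (a - c) (b - c)
  have hab : det2 (a - x) (b - x) = w 2 * S := by
    simp only [S, det2, PiLp.sub_apply, ← hxw, PiLp.add_apply, PiLp.smul_apply, smul_eq_mul, hw₂]
    ring
  have hac : det2 (a - x) (c - x) = -(w 1 * S) := by
    simp only [S, det2, PiLp.sub_apply, ← hxw, PiLp.add_apply, PiLp.smul_apply, smul_eq_mul, hw₂]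
    ring
  have hbc : det2 (b - x) (c - x) = w 0 * S := by
    simp only [S, det2, PiLp.sub_apply, ← hxw, PiLp.add_apply, PiLp.smul_apply, smul_eq_mul, hw₂]
    ring
  rw [hab, hac, hbc, abs_neg, abs_mul, abs_mul, abs_mul, abs_of_nonneg (hw₀ 0),
    abs_of_nonneg (hw₀ 1), abs_of_nonneg (hw₀ 2)]
  linear_combination |S| * hw₁

end Det2

/-- If P₄ lies in the interior of the triangle P₁P₂P₃, then P₄ minimizes both the
L¹ median objective and the bivariate Oja objective of the four points. -/
theorem interior_point_is_median
    (P₁ P₂ P₃ P₄ : EuclideanSpace ℝ (Fin 2))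
    (h : P₄ ∈ interior (convexHull ℝ ({P₁, P₂, P₃} : Set (EuclideanSpace ℝ (Fin 2))))) :
    (∀ y : EuclideanSpace ℝ (Fin 2),
      ‖P₄ - P₁‖ + ‖P₄ - P₂‖ + ‖P₄ - P₃‖ + ‖P₄ - P₄‖ ≤
      ‖y - P₁‖ + ‖y - P₂‖ + ‖y - P₃‖ + ‖y - P₄‖) ∧
    (∀ y : EuclideanSpace ℝ (Fin 2), ojaObj4 P₁ P₂ P₃ P₄ P₄ ≤ ojaObj4 P₁ P₂ P₃ P₄ y) := by
  have hx := interior_subset h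
  have hspan : affineSpan ℝ {P₁, P₂, P₃} = ⊤ :=
    interior_convexHull_nonempty_iff_affineSpan_eq_top.mp ⟨P₄, h⟩
  refine ⟨fun y => ?_, fun y => ?_⟩
  · rw [sub_self, norm_zero, add_zero]
    rcases mem_convexHull_insert_pair_of_mem_convexHull_triple hx
      (hspan ▸ AffineSubspace.mem_top ℝ _ y) with hy | hy | hy
    · linarith [norm_sub_add_norm_sub_add_norm_sub_le_of_mem_convexHull (c := P₁) hy]
    · linarith [norm_sub_add_norm_sub_add_norm_sub_le_of_mem_convexHull (c := P₂) hy]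
    · linarith [norm_sub_add_norm_sub_add_norm_sub_le_of_mem_convexHull (c := P₃) hy]
  · have harea := abs_det2_sub_add_abs_det2_sub_add_abs_det2_sub_of_mem_convexHull hx
    have hle := abs_det2_sub_le P₁ P₂ P₃ y
    simp only [ojaObj4, sub_self, det2_zero_right, abs_zero, add_zero]
    linarith [abs_nonneg (det2 (P₁ - y) (P₄ - y)), abs_nonneg (det2 (P₂ - y) (P₄ - y)),
      abs_nonneg (det2 (P₃ - y) (P₄ - y))]
end

section
/- For a triangle ABC with an interior angle at A of at least 120 degrees, the vertex A minimizes the sum of distances ‖x - A‖ + ‖x - B‖ + ‖x - C‖ over x ∈ ℝ². -/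
/-!
Put `A` at the origin and let `e`, `f` be the unit vectors pointing to `B` and `C`. An angle of at
least `2π/3` means `⟪e, f⟫ ≤ -1/2`, i.e. `‖e + f‖ ≤ 1`. Projecting onto these directions,
`‖x - B‖ ≥ ‖B - A‖ - ⟪x - A, e⟫`, `‖x - C‖ ≥ ‖C - A‖ - ⟪x - A, f⟫` and
`‖x - A‖ ≥ ⟪x - A, e + f⟫`; summing, the inner products cancel.
-/

open Real RealInnerProductSpace

section InnerProductSpace

open InnerProductGeometry

variable {V : Type*} [NormedAddCommGroup V] [InnerProductSpace ℝ V]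

lemma cos_angle_le_neg_half {u v : V} (h : 2 * π / 3 ≤ angle u v) :
    cos (angle u v) ≤ -(1 / 2) := by
  have hcos : cos (2 * π / 3) = -(1 / 2) := by
    rw [show 2 * π / 3 = π - π / 3 by ring, cos_pi_sub, cos_pi_div_three]
  rw [← hcos]
  exact cos_le_cos_of_nonneg_of_le_pi (by positivity) (angle_le_pi u v) h

lemma norm_add_le_one_of_inner_le_neg_half {e f : V} (he : ‖e‖ = 1) (hf : ‖f‖ = 1)
    (h : ⟪e, f⟫ ≤ -(1 / 2)) : ‖e + f‖ ≤ 1 := by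
  rw [← sq_le_one_iff₀ (norm_nonneg _), norm_add_sq_real, he, hf]
  linarith

lemma norm_add_norm_le_of_norm_add_le_one {u v e f : V} (hue : ⟪u, e⟫ = ‖u‖)
    (hvf : ⟪v, f⟫ = ‖v‖) (he : ‖e‖ ≤ 1) (hf : ‖f‖ ≤ 1) (hef : ‖e + f‖ ≤ 1) (w : V) :
    ‖u‖ + ‖v‖ ≤ ‖w‖ + ‖w - u‖ + ‖w - v‖ := by
  calc ‖u‖ + ‖v‖ = ⟪w, e + f⟫ + ⟪u - w, e⟫ + ⟪v - w, f⟫ := by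
        rw [inner_add_right, inner_sub_left, inner_sub_left, hue, hvf]
        ring
    _ ≤ ‖w‖ * ‖e + f‖ + ‖u - w‖ * ‖e‖ + ‖v - w‖ * ‖f‖ := by
        gcongr <;> exact real_inner_le_norm _ _
    _ ≤ ‖w‖ + ‖w - u‖ + ‖w - v‖ := by
        rw [norm_sub_rev u, norm_sub_rev v]
        gcongr <;> exact mul_le_of_le_one_right (norm_nonneg _) ‹_›

lemma inner_smul_inv_norm_right_self (u : V) : ⟪u, ‖u‖⁻¹ • u⟫ = ‖u‖ := by
  rw [real_inner_smul_right, real_inner_self_eq_norm_sq]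
  rcases eq_or_ne ‖u‖ 0 with hu | hu
  · simp [hu]
  · field_simp

lemma norm_add_norm_le_of_two_pi_div_three_le_angle {u v : V}
    (h : 2 * π / 3 ≤ angle u v) (w : V) : ‖u‖ + ‖v‖ ≤ ‖w‖ + ‖w - u‖ + ‖w - v‖ := by
  have h_gt : π / 2 < angle u v := by linarith [pi_pos]
  have hu : u ≠ 0 := by rintro rfl; simp at h_gt
  have hv : v ≠ 0 := by rintro rfl; simp at h_gt
  have he : ‖‖u‖⁻¹ • u‖ = 1 := by simpa using norm_smul_inv_norm (𝕜 := ℝ) hu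
  have hf : ‖‖v‖⁻¹ • v‖ = 1 := by simpa using norm_smul_inv_norm (𝕜 := ℝ) hv
  have hef : ⟪‖u‖⁻¹ • u, ‖v‖⁻¹ • v⟫ ≤ -(1 / 2) := by
    rw [← cos_angle_mul_norm_mul_norm, he, hf, mul_one, mul_one,
      angle_smul_left_of_pos _ _ (inv_pos.mpr (norm_pos_iff.mpr hu)),
      angle_smul_right_of_pos _ _ (inv_pos.mpr (norm_pos_iff.mpr hv))]
    exact cos_angle_le_neg_half h
  exact norm_add_norm_le_of_norm_add_le_one (inner_smul_inv_norm_right_self u)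
    (inner_smul_inv_norm_right_self v) he.le hf.le
    (norm_add_le_one_of_inner_le_neg_half he hf hef) w

end InnerProductSpace

open EuclideanGeometry

lemma dist_add_dist_le_of_two_pi_div_three_le_angle {V P : Type*} [NormedAddCommGroup V]
    [InnerProductSpace ℝ V] [MetricSpace P] [NormedAddTorsor V P] {a b c : P}
    (h : 2 * π / 3 ≤ ∠ b a c) (x : P) : dist a b + dist a c ≤ dist x a + dist x b + dist x c := by
  have key := norm_add_norm_le_of_two_pi_div_three_le_angle h (x -ᵥ a)
  rwa [vsub_sub_vsub_cancel_right, vsub_sub_vsub_cancel_right, ← dist_eq_norm_vsub',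
    ← dist_eq_norm_vsub', ← dist_eq_norm_vsub, ← dist_eq_norm_vsub, ← dist_eq_norm_vsub] at key

theorem obtuse_vertex_minimizes_distance_sum_general
    (A B C : EuclideanSpace ℝ (Fin 2))
    (hangle : 2 * π / 3 ≤ ∠ B A C) :
    ∀ x : EuclideanSpace ℝ (Fin 2),
      ‖A - A‖ + ‖A - B‖ + ‖A - C‖ ≤ ‖x - A‖ + ‖x - B‖ + ‖x - C‖ := by
  intro x
  simpa only [sub_self, norm_zero, zero_add, ← dist_eq_norm] using
    dist_add_dist_le_of_two_pi_div_three_le_angle hangle x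

/-- If the interior angle of a triangle at vertex A is at least 120 degrees,
then A minimizes the sum of distances to the three vertices. -/
theorem obtuse_vertex_minimizes_distance_sum
    (A B C : EuclideanSpace ℝ (Fin 2)) (hB : B ≠ A) (hC : C ≠ A)
    (hangle : 2 * π / 3 ≤ ∠ B A C) :
    ∀ x : EuclideanSpace ℝ (Fin 2),
      ‖A - A‖ + ‖A - B‖ + ‖A - C‖ ≤ ‖x - A‖ + ‖x - B‖ + ‖x - C‖ :=
  obtuse_vertex_minimizes_distance_sum_general A B C hangle
end

section
/- For a triangle ABC all of whose interior angles are less than 120 degrees, the minimizer of x ↦ ‖x - A‖ + ‖x - B‖ + ‖x - C‖ is the unique interior point (the Fermat–Torricelli point) from which each pair of the three vertices subtends an angle of exactly 120 degrees. -/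
open Real EuclideanGeometry
open scoped RealInnerProductSpace
open InnerProductGeometry (angle_nonneg angle_le_pi angle_neg_neg angle_normalize_left
  angle_normalize_right inner_eq_cos_angle_of_norm_eq_one)
open NormedSpace (norm_normalize)

/-!
A minimizer `F` of `x ↦ ‖x - A‖ + ‖x - B‖ + ‖x - C‖` exists by coercivity. It is not a vertex:
from `A`, the one-sided derivative of the sum in the direction `d` of the inner angle bisector
(the sum of the unit vectors towards `B` and `C`) is `‖d‖ - ‖d‖²`, which is negative because
`‖d‖ > 1` exactly when `∠ B A C < 2π/3`. Elsewhere the sum is differentiable with gradient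
`∑ normalize (x - P)`, which therefore vanishes at `F`. Three unit vectors with zero sum make
pairwise angles `2π/3`, and the vanishing gradient writes `F` as a combination of the vertices
with positive weights `‖F - P‖⁻¹`, so `F` is interior. Finally, the midpoint of two distinct
minimizers is again a minimizer, which forces equality in the triangle inequality at each vertex
and puts `A`, `B`, `C` on the line through the two minimizers.
-/

theorem HasDerivAt.nonneg_of_forall_lt_le {φ : ℝ → ℝ} {φ' a : ℝ}
    (hφ : HasDerivAt φ φ' a) (hmin : ∀ t, a < t → φ a ≤ φ t) : 0 ≤ φ' := by
  refine ge_of_tendsto hφ.tendsto_slope_zero_right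
    (eventually_nhdsWithin_of_forall fun t ht => ?_)
  have ht : (0 : ℝ) < t := ht
  exact smul_nonneg (inv_nonneg.2 ht.le) (sub_nonneg.2 (hmin _ (lt_add_of_pos_right a ht)))

theorem cos_two_pi_div_three : cos (2 * π / 3) = -(1 / 2) := by
  rw [show 2 * π / 3 = π - π / 3 by ring, cos_pi_sub, cos_pi_div_three]

theorem mem_affineSpan_pair_of_sameRay_vsub {V P : Type*} [AddCommGroup V] [Module ℝ V]
    [AddTorsor V P] {p₁ p₂ x : P} (h : SameRay ℝ (p₁ -ᵥ x) (p₂ -ᵥ x)) (hne : p₁ ≠ p₂) :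
    x ∈ line[ℝ, p₁, p₂] := by
  have hcol : Collinear ℝ ({x, p₁, p₂} : Set P) := by
    rcases wbtw_total_of_sameRay_vsub_left h with h | h
    · exact h.collinear
    · rw [Set.pair_comm]
      exact h.collinear
  exact hcol.mem_affineSpan_of_mem_of_ne (by simp) (by simp) (by simp) hne

theorem mem_interior_convexHull_of_smul_sub_add_eq_zero {V : Type*} [NormedAddCommGroup V]
    [NormedSpace ℝ V] [FiniteDimensional ℝ V] (hV : Module.finrank ℝ V = 2) {A B C x : V}
    (hABC : AffineIndependent ℝ ![A, B, C]) {a b c : ℝ} (ha : 0 < a) (hb : 0 < b) (hc : 0 < c)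
    (h : a • (x - A) + b • (x - B) + c • (x - C) = 0) :
    x ∈ interior (convexHull ℝ ({A, B, C} : Set V)) := by
  have htop : affineSpan ℝ (Set.range ![A, B, C]) = ⊤ := by
    rw [hABC.affineSpan_eq_top_iff_card_eq_finrank_add_one, hV, Fintype.card_fin]
  obtain ⟨T, hT⟩ : ∃ T : AffineBasis (Fin 3) ℝ V, ⇑T = ![A, B, C] :=
    ⟨⟨_, hABC, htop⟩, rfl⟩
  have hs : 0 < a + b + c := by positivity
  let w : Fin 3 → ℝ := ![a / (a + b + c), b / (a + b + c), c / (a + b + c)]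
  have hw : ∑ i, w i = 1 := by
    simp only [w, Fin.sum_univ_three, Matrix.cons_val_zero, Matrix.cons_val_one,
      Matrix.cons_val_two, Matrix.head_cons, Matrix.tail_cons]
    field_simp
  have hx : Finset.univ.affineCombination ℝ T w = x := by
    have hsx : (a + b + c) • x = a • A + b • B + c • C := by
      rw [← sub_eq_zero, ← h]
      module
    rw [Finset.affineCombination_eq_linear_combination _ _ _ hw, Fin.sum_univ_three, hT]
    simp only [w, Matrix.cons_val_zero, Matrix.cons_val_one, Matrix.cons_val_two,
      Matrix.head_cons, Matrix.tail_cons]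
    calc _ = (a + b + c)⁻¹ • (a • A + b • B + c • C) := by module
      _ = x := by rw [← hsx, inv_smul_smul₀ hs.ne']
  have hrange : Set.range T = {A, B, C} := by
    rw [hT]
    simp only [Matrix.range_cons, Matrix.range_empty, Set.singleton_union, Set.union_empty]
  rw [← hrange, T.interior_convexHull]
  intro i
  rw [← hx, T.coord_apply_combination_of_mem (Finset.mem_univ i) hw]
  fin_cases i <;>
    simp only [w, Fin.reduceFinMk, Fin.zero_eta, Fin.mk_one, Matrix.cons_val] <;> positivity

section InnerProductSpace

variable {V : Type*} [NormedAddCommGroup V] [InnerProductSpace ℝ V]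

theorem hasDerivAt_norm_add_smul_sub {p q : V} (h : p ≠ q) (d : V) :
    HasDerivAt (fun t : ℝ => ‖p + t • d - q‖) ⟪NormedSpace.normalize (p - q), d⟫ 0 := by
  have hpq : 0 < ‖p - q‖ := norm_pos_iff.2 (sub_ne_zero.2 h)
  have hline : HasDerivAt (fun t : ℝ => p + t • d - q) d 0 := by
    simpa using ((hasDerivAt_id (0 : ℝ)).smul_const d).const_add p |>.sub_const q
  have hnorm := hline.norm_sq.sqrt (by simpa using hpq.ne')
  simp only [sqrt_sq (norm_nonneg _)] at hnorm
  convert hnorm using 1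
  simp only [NormedSpace.normalize, real_inner_smul_left, zero_smul, add_zero]
  field_simp

theorem norm_add_sq_eq_two_add_two_mul_cos_angle {u v : V} (hu : ‖u‖ = 1) (hv : ‖v‖ = 1) :
    ‖u + v‖ ^ 2 = 2 + 2 * cos (InnerProductGeometry.angle u v) := by
  rw [norm_add_sq_real, hu, hv, inner_eq_cos_angle_of_norm_eq_one hu hv]
  ring

theorem two_pi_div_three_le_angle_of_norm_add_le_one {u v : V} (hu : ‖u‖ = 1) (hv : ‖v‖ = 1)
    (h : ‖u + v‖ ≤ 1) : 2 * π / 3 ≤ InnerProductGeometry.angle u v := by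
  by_contra! hlt
  have := cos_lt_cos_of_nonneg_of_le_pi (angle_nonneg u v) (by linarith [pi_pos]) hlt
  have := norm_add_sq_eq_two_add_two_mul_cos_angle hu hv
  nlinarith [norm_nonneg (u + v), cos_two_pi_div_three]

theorem angle_eq_two_pi_div_three_of_add_add_eq_zero {u v w : V} (hu : ‖u‖ = 1)
    (hv : ‖v‖ = 1) (hw : ‖w‖ = 1) (h : u + v + w = 0) :
    InnerProductGeometry.angle u v = 2 * π / 3 := by
  have huv : ‖u + v‖ = 1 := by rw [eq_neg_of_add_eq_zero_left h, norm_neg, hw]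
  have hcos : cos (InnerProductGeometry.angle u v) = cos (2 * π / 3) := by
    have := norm_add_sq_eq_two_add_two_mul_cos_angle hu hv
    rw [cos_two_pi_div_three]
    nlinarith
  exact injOn_cos ⟨angle_nonneg u v, angle_le_pi u v⟩
    ⟨by positivity, by linarith [pi_pos]⟩ hcos

theorem angle_eq_angle_normalize_sub (A B F : V) :
    ∠ A F B = InnerProductGeometry.angle (NormedSpace.normalize (F - A))
      (NormedSpace.normalize (F - B)) := by
  rw [EuclideanGeometry.angle, ← angle_neg_neg, neg_vsub_eq_vsub_rev, neg_vsub_eq_vsub_rev,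
    vsub_eq_sub, vsub_eq_sub, angle_normalize_left, angle_normalize_right]

theorem angle_eq_two_pi_div_three_of_normalize_add_add_eq_zero {A B C F : V} (hFA : F ≠ A)
    (hFB : F ≠ B) (hFC : F ≠ C)
    (h : NormedSpace.normalize (F - A) + NormedSpace.normalize (F - B) +
      NormedSpace.normalize (F - C) = 0) : ∠ A F B = 2 * π / 3 := by
  rw [angle_eq_angle_normalize_sub]
  exact angle_eq_two_pi_div_three_of_add_add_eq_zero (norm_normalize (sub_ne_zero.2 hFA))
    (norm_normalize (sub_ne_zero.2 hFB)) (norm_normalize (sub_ne_zero.2 hFC)) h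

end InnerProductSpace

def distSum {V : Type*} [NormedAddCommGroup V] (A B C x : V) : ℝ :=
  ‖x - A‖ + ‖x - B‖ + ‖x - C‖

section distSum

variable {V : Type*} [NormedAddCommGroup V]

theorem distSum_swap_left (A B C x : V) : distSum A B C x = distSum B A C x := by
  unfold distSum; ring

theorem distSum_rotate (A B C x : V) : distSum A B C x = distSum C A B x := by
  unfold distSum; ring

theorem continuous_distSum (A B C : V) : Continuous (distSum A B C) := by
  unfold distSum; fun_prop

theorem exists_forall_distSum_le [ProperSpace V] (A B C : V) :
    ∃ F, ∀ x, distSum A B C F ≤ distSum A B C x := by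
  refine (continuous_distSum A B C).exists_forall_le ?_
  refine Filter.tendsto_atTop_mono (fun x => ?_)
    (Filter.tendsto_atTop_add_const_right _ (-‖A‖) tendsto_norm_cocompact_atTop)
  have := norm_sub_norm_le x A
  unfold distSum
  linarith [norm_nonneg (x - B), norm_nonneg (x - C)]

variable [InnerProductSpace ℝ V]

theorem two_pi_div_three_le_angle_of_forall_distSum_le {A B C : V} (hAB : A ≠ B) (hAC : A ≠ C)
    (hmin : ∀ x, distSum A B C A ≤ distSum A B C x) : 2 * π / 3 ≤ ∠ B A C := by
  set u := NormedSpace.normalize (A - B)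
  set v := NormedSpace.normalize (A - C)
  set d := -(u + v)
  -- `φ` agrees with `t ↦ distSum A B C (A + t • d)` for `t ≥ 0` but is differentiable at `0`.
  have hφ : HasDerivAt (fun t : ℝ => t * ‖d‖ + ‖A + t • d - B‖ + ‖A + t • d - C‖)
      (‖d‖ + ⟪u, d⟫ + ⟪v, d⟫) 0 :=
    ((hasDerivAt_mul_const ‖d‖).add (hasDerivAt_norm_add_smul_sub hAB d)).add
      (hasDerivAt_norm_add_smul_sub hAC d)
  have hslope := hφ.nonneg_of_forall_lt_le fun t ht => by
    simpa [distSum, norm_smul, norm_of_nonneg ht.le] using hmin (A + t • d)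
  have hd : ‖d‖ + ⟪u, d⟫ + ⟪v, d⟫ = ‖u + v‖ - ‖u + v‖ ^ 2 := by
    rw [add_assoc, ← inner_add_left, inner_neg_right, real_inner_self_eq_norm_sq, norm_neg]
    ring
  have hle : ‖u + v‖ ≤ 1 := by nlinarith [norm_nonneg (u + v)]
  rw [angle_eq_angle_normalize_sub]
  exact two_pi_div_three_le_angle_of_norm_add_le_one (norm_normalize (sub_ne_zero.2 hAB))
    (norm_normalize (sub_ne_zero.2 hAC)) hle

theorem normalize_add_normalize_add_normalize_eq_zero_of_forall_distSum_le {A B C F : V}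
    (hFA : F ≠ A) (hFB : F ≠ B) (hFC : F ≠ C) (hmin : ∀ x, distSum A B C F ≤ distSum A B C x) :
    NormedSpace.normalize (F - A) + NormedSpace.normalize (F - B) +
      NormedSpace.normalize (F - C) = 0 := by
  set s := NormedSpace.normalize (F - A) + NormedSpace.normalize (F - B) +
    NormedSpace.normalize (F - C)
  have hφ : HasDerivAt (fun t : ℝ => distSum A B C (F + t • -s)) ⟪s, -s⟫ 0 := by
    simp only [s, inner_add_left]
    exact ((hasDerivAt_norm_add_smul_sub hFA _).add (hasDerivAt_norm_add_smul_sub hFB _)).add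
      (hasDerivAt_norm_add_smul_sub hFC _)
  have hslope := hφ.nonneg_of_forall_lt_le fun t _ => by simpa using hmin (F + t • -s)
  rw [inner_neg_right, real_inner_self_eq_norm_sq] at hslope
  exact norm_eq_zero.1 (by nlinarith [norm_nonneg s])

theorem collinear_of_forall_distSum_le {A B C F F' : V}
    (hF : ∀ x, distSum A B C F ≤ distSum A B C x)
    (hF' : ∀ x, distSum A B C F' ≤ distSum A B C x) (hne : F ≠ F') :
    Collinear ℝ ({A, B, C} : Set V) := by
  have hmid : ∀ X, ‖(2⁻¹ : ℝ) • (F + F') - X‖ = 2⁻¹ * ‖(F - X) + (F' - X)‖ := fun X => by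
    rw [show (2⁻¹ : ℝ) • (F + F') - X = (2⁻¹ : ℝ) • ((F - X) + (F' - X)) by module,
      norm_smul]
    norm_num
  have hmin := hF ((2⁻¹ : ℝ) • (F + F'))
  have heq := le_antisymm (hF F') (hF' F)
  simp only [distSum, hmid] at hmin heq
  have := norm_add_le (F - A) (F' - A)
  have := norm_add_le (F - B) (F' - B)
  have := norm_add_le (F - C) (F' - C)
  have hline : ∀ X, ‖(F - X) + (F' - X)‖ = ‖F - X‖ + ‖F' - X‖ → X ∈ line[ℝ, F, F'] :=
    fun X hX => mem_affineSpan_pair_of_sameRay_vsub (sameRay_iff_norm_add.2 hX) hne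
  exact collinear_triple_of_mem_affineSpan_pair (hline A (by linarith))
    (hline B (by linarith)) (hline C (by linarith))

end distSum

/-- For a triangle with all interior angles less than 120 degrees, the minimizer
of the sum of distances to the vertices is the unique interior point (the
Fermat–Torricelli point) from which all three sides subtend 120-degree angles. -/
theorem fermat_torricelli_point
    (A B C : EuclideanSpace ℝ (Fin 2))
    (hABC : AffineIndependent ℝ ![A, B, C])
    (h1 : ∠ B A C < 2 * π / 3) (h2 : ∠ A B C < 2 * π / 3) (h3 : ∠ A C B < 2 * π / 3) :
    ∃! F : EuclideanSpace ℝ (Fin 2),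
      (∀ x : EuclideanSpace ℝ (Fin 2),
        ‖F - A‖ + ‖F - B‖ + ‖F - C‖ ≤ ‖x - A‖ + ‖x - B‖ + ‖x - C‖) ∧
      F ∈ interior (convexHull ℝ ({A, B, C} : Set (EuclideanSpace ℝ (Fin 2)))) ∧
      ∠ A F B = 2 * π / 3 ∧ ∠ B F C = 2 * π / 3 ∧ ∠ C F A = 2 * π / 3 := by
  have hnc := affineIndependent_iff_not_collinear_set.1 hABC
  have hAB : A ≠ B := by rintro rfl; simp [collinear_pair] at hnc
  have hAC : A ≠ C := by rintro rfl; simp [collinear_pair] at hnc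
  have hBC : B ≠ C := by rintro rfl; simp [collinear_pair] at hnc
  obtain ⟨F, hF⟩ := exists_forall_distSum_le A B C
  have hFA : F ≠ A := by
    rintro rfl
    exact (two_pi_div_three_le_angle_of_forall_distSum_le hAB hAC hF).not_gt h1
  have hFB : F ≠ B := by
    rintro rfl
    refine (two_pi_div_three_le_angle_of_forall_distSum_le hAB.symm hBC ?_).not_gt h2
    simpa only [← distSum_swap_left] using hF
  have hFC : F ≠ C := by
    rintro rfl
    refine (two_pi_div_three_le_angle_of_forall_distSum_le hAC.symm hBC.symm ?_).not_gt h3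
    simpa only [← distSum_rotate] using hF
  have hsum := normalize_add_normalize_add_normalize_eq_zero_of_forall_distSum_le hFA hFB hFC hF
  have hw : ∀ X, F ≠ X → 0 < ‖F - X‖⁻¹ := fun X h => by
    simpa using sub_ne_zero.2 h
  refine ⟨F, ⟨hF, ?_, ?_, ?_, ?_⟩, fun F' hF' => ?_⟩
  · exact mem_interior_convexHull_of_smul_sub_add_eq_zero finrank_euclideanSpace_fin hABC
      (hw A hFA) (hw B hFB) (hw C hFC) hsum
  · exact angle_eq_two_pi_div_three_of_normalize_add_add_eq_zero hFA hFB hFC hsum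
  · exact angle_eq_two_pi_div_three_of_normalize_add_add_eq_zero hFB hFC hFA
      (by rw [← hsum]; abel)
  · exact angle_eq_two_pi_div_three_of_normalize_add_add_eq_zero hFC hFA hFB
      (by rw [← hsum]; abel)
  · by_contra hne
    exact hnc (collinear_of_forall_distSum_le hF'.1 hF hne)
end
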